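/- Let G be a simply-connected T-graph, let p ∈ G, and let λ ∈ Γ(p), where Γ(p) denotes the set of labels of paths in R(G,T) starting at p, together with the identity of Γ. Then: (i) the map Γ(p) → G sending γ to γ.p is a bijection; (ii) Γ(λ.p) = Γ(p)·λ⁻¹ := {γ·λ⁻¹ : γ ∈ Γ(p)}. -/

import Mathlib

/-!
Every path label `γ` from `p` to `q` satisfies `γ.p = q`, so `γ ↦ γ.p` maps `Γ(p)` into `G`, and
onto `G` by connectivity. Two labels `γ, γ'` with `γ.p = γ'.p` are labels of paths with the same
endpoints; following one and returning along the other gives a loop at `p` with label `γ'⁻¹γ`,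
which is trivial by simple connectivity. For (ii), prepending or removing a fixed path from `p`
to `λ.p` with label `λ` shifts labels by `λ`.
-/

/-- `ℤ[1/2]`: the subring of `ℚ` of rationals whose denominator is a power of `2`. -/
def Zhalf : Subring ℚ where
  carrier := {q : ℚ | ∃ (m : ℤ) (n : ℕ), q = (m : ℚ) / 2 ^ n}
  zero_mem' := ⟨0, 0, by norm_num⟩
  one_mem' := ⟨1, 0, by norm_num⟩
  add_mem' := by
    rintro a b ⟨m, n, rfl⟩ ⟨m', n', rfl⟩
    exact ⟨m * 2 ^ n' + m' * 2 ^ n, n + n', by push_cast [pow_add]; field_simp⟩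
  mul_mem' := by
    rintro a b ⟨m, n, rfl⟩ ⟨m', n', rfl⟩
    exact ⟨m * m', n + n', by push_cast [pow_add]; field_simp⟩
  neg_mem' := by
    rintro a ⟨m, n, rfl⟩
    exact ⟨-m, n, by push_cast; ring⟩


/-- The ring automorphism of `ℤ[1/2][A]` induced by the action of `γ ∈ Γ` on `A`. -/
noncomputable def gact {A Γ : Type*} [CommGroup A] [Group Γ] (φ : Γ →* MulAut A) (γ : Γ)
    (r : MonoidAlgebra Zhalf A) : MonoidAlgebra Zhalf A :=
  MonoidAlgebra.ofCoeff (Finsupp.mapDomain (⇑(φ γ)) r.coeff)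

/-- A single traversal, forwards or backwards, of an edge of the multigraph `R(G,T)`,
for `T = Σ_i γv i · fv i`, recording the label `g` of the traversal. -/
def EdgeStep {A Γ : Type*} [CommGroup A] [Group Γ] (φ : Γ →* MulAut A) {m : ℕ}
    (γv : Fin m → Γ) (fv : Fin m → MonoidAlgebra Zhalf A)
    (G : Finset (MonoidAlgebra Zhalf A))
    (p : MonoidAlgebra Zhalf A) (g : Γ) (q : MonoidAlgebra Zhalf A) : Prop :=
  p ∈ G ∧ q ∈ G ∧
    ((∃ i, fv i * p ≠ 0 ∧ gact φ (γv i) p = q ∧ g = γv i) ∨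
     (∃ i, fv i * q ≠ 0 ∧ gact φ (γv i) q = p ∧ g = (γv i)⁻¹))

/-- Paths: the reflexive–transitive closure of the step relation `St`, recording labels.
`Reach St p g q` means there is a (possibly empty) path from `p` to `q` with label `g`;
labels compose as `λ_w ⋯ λ_1`. -/
inductive Reach {P G' : Type*} [Group G'] (St : P → G' → P → Prop) : P → G' → P → Prop
  | refl (p : P) : Reach St p 1 p
  | tail {p q r : P} {g h : G'} : Reach St p g q → St q h r → Reach St p (h * g) r

theorem gact_one {A Γ : Type*} [CommGroup A] [Group Γ] (φ : Γ →* MulAut A)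
    (r : MonoidAlgebra Zhalf A) : gact φ 1 r = r := by
  simp [gact, Finsupp.mapDomain_id]

theorem gact_mul {A Γ : Type*} [CommGroup A] [Group Γ] (φ : Γ →* MulAut A) (g h : Γ)
    (r : MonoidAlgebra Zhalf A) : gact φ (g * h) r = gact φ g (gact φ h r) := by
  simp only [gact, map_mul]
  rw [← Finsupp.mapDomain_comp]
  rfl

namespace Reach

variable {P G' : Type*} [Group G'] {St : P → G' → P → Prop}

/-- The set `Γ(p)` of the paper. -/
def labelsFrom (St : P → G' → P → Prop) (p : P) : Set G' := {g | ∃ q, Reach St p g q}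

theorem trans {p q r : P} {g h : G'} (h₁ : Reach St p g q) (h₂ : Reach St q h r) :
    Reach St p (h * g) r := by
  induction h₂ with
  | refl => simpa using h₁
  | tail _ hst ih => simpa [mul_assoc] using ih.tail hst

theorem symm (hSt : ∀ {p g q}, St p g q → St q g⁻¹ p) {p q : P} {g : G'}
    (h : Reach St p g q) : Reach St q g⁻¹ p := by
  induction h with
  | refl => simpa using Reach.refl (St := St) _
  | @tail _ _ g k _ hst ih =>
    have hback : Reach St _ (k⁻¹ * 1) _ := (Reach.refl _).tail (hSt hst)
    simpa using hback.trans ih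

theorem mem {S : Set P} (hS : ∀ {p g q}, St p g q → q ∈ S) {p q : P} {g : G'} (hp : p ∈ S)
    (h : Reach St p g q) : q ∈ S := by
  induction h with
  | refl => exact hp
  | tail _ hst _ => exact hS hst

theorem act_eq {act : G' → P → P} (hone : ∀ p, act 1 p = p)
    (hmul : ∀ g h p, act (g * h) p = act g (act h p)) (hSt : ∀ {p g q}, St p g q → act g p = q)
    {p q : P} {g : G'} (h : Reach St p g q) : act g p = q := by
  induction h with
  | refl => exact hone _
  | tail _ hst ih => rw [hmul, ih, hSt hst]

theorem label_unique (hSt : ∀ {p g q}, St p g q → St q g⁻¹ p) {p q : P}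
    (hloop : ∀ g, Reach St p g p → g = 1) {g g' : G'} (h : Reach St p g q)
    (h' : Reach St p g' q) : g = g' :=
  (inv_mul_eq_one.mp (hloop _ (h.trans (h'.symm hSt)))).symm

theorem bijOn_labelsFrom {act : G' → P → P} {S : Set P}
    (hSt : ∀ {p g q}, St p g q → St q g⁻¹ p) {p : P}
    (hact : ∀ {g q}, Reach St p g q → act g p = q) (hmem : ∀ {g q}, Reach St p g q → q ∈ S)
    (hconn : ∀ q ∈ S, ∃ g, Reach St p g q) (hloop : ∀ g, Reach St p g p → g = 1) :
    Set.BijOn (act · p) (labelsFrom St p) S := by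
  refine ⟨?_, ?_, ?_⟩
  · rintro g ⟨q, hq⟩
    simpa only [hact hq] using hmem hq
  · rintro g ⟨q, hq⟩ g' ⟨q', hq'⟩ heq
    simp only [hact hq, hact hq'] at heq
    subst heq
    exact label_unique hSt hloop hq hq'
  · intro q hq
    obtain ⟨g, hg⟩ := hconn q hq
    exact ⟨g, ⟨q, hg⟩, hact hg⟩

theorem labelsFrom_eq_image (hSt : ∀ {p g q}, St p g q → St q g⁻¹ p) {p q : P} {g : G'}
    (h : Reach St p g q) : labelsFrom St q = (· * g⁻¹) '' labelsFrom St p := by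
  ext k
  constructor
  · rintro ⟨r, hr⟩
    exact ⟨k * g, ⟨r, h.trans hr⟩, by group⟩
  · rintro ⟨k, ⟨r, hr⟩, rfl⟩
    exact ⟨r, (h.symm hSt).trans hr⟩

end Reach

section EdgeStep

variable {A Γ : Type*} [CommGroup A] [Group Γ] {φ : Γ →* MulAut A} {m : ℕ}
  {γv : Fin m → Γ} {fv : Fin m → MonoidAlgebra Zhalf A} {G : Finset (MonoidAlgebra Zhalf A)}
  {p q : MonoidAlgebra Zhalf A} {g : Γ}

theorem EdgeStep.symm (h : EdgeStep φ γv fv G p g q) : EdgeStep φ γv fv G q g⁻¹ p := by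
  obtain ⟨hp, hq, ⟨i, hi, hpq, rfl⟩ | ⟨i, hi, hqp, rfl⟩⟩ := h
  · exact ⟨hq, hp, Or.inr ⟨i, hi, hpq, rfl⟩⟩
  · exact ⟨hq, hp, Or.inl ⟨i, hi, hqp, inv_inv _⟩⟩

theorem EdgeStep.gact_eq (h : EdgeStep φ γv fv G p g q) : gact φ g p = q := by
  obtain ⟨-, -, ⟨i, -, hpq, rfl⟩ | ⟨i, -, hqp, rfl⟩⟩ := h
  · exact hpq
  · rw [← hqp, ← gact_mul, inv_mul_cancel, gact_one]

end EdgeStep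

theorem statement18_general (Γ : Type) [Group Γ] (A : Type) [CommGroup A]
    (φ : Γ →* MulAut A)
    (m : ℕ) (γv : Fin m → Γ)
    (fv : Fin m → MonoidAlgebra Zhalf A)
    (G : Finset (MonoidAlgebra Zhalf A))
    (hconn : ∀ p ∈ G, ∀ q ∈ G, ∃ g : Γ, Reach (EdgeStep φ γv fv G) p g q)
    (hsimp : ∀ p ∈ G, ∀ g : Γ, Reach (EdgeStep φ γv fv G) p g p → g = 1)
    (p : MonoidAlgebra Zhalf A) (hp : p ∈ G) (lam : Γ)
    (hlam : lam ∈ {g : Γ | ∃ q, Reach (EdgeStep φ γv fv G) p g q}) :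
    Set.BijOn (fun g => gact φ g p)
        {g : Γ | ∃ q, Reach (EdgeStep φ γv fv G) p g q} ↑G ∧
      {g : Γ | ∃ q, Reach (EdgeStep φ γv fv G) (gact φ lam p) g q} =
        (fun g => g * lam⁻¹) '' {g : Γ | ∃ q, Reach (EdgeStep φ γv fv G) p g q} := by
  have hact {p q : MonoidAlgebra Zhalf A} {g : Γ} (h : Reach (EdgeStep φ γv fv G) p g q) :
      gact φ g p = q :=
    Reach.act_eq (gact_one φ) (gact_mul φ) (fun hs ↦ EdgeStep.gact_eq hs) h
  obtain ⟨q, hq⟩ := hlam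
  refine ⟨Reach.bijOn_labelsFrom (fun hs ↦ EdgeStep.symm hs) hact
    (fun h ↦ Reach.mem (fun hs ↦ hs.2.1) hp h) (hconn p hp) (hsimp p hp), ?_⟩
  rw [hact hq]
  exact Reach.labelsFrom_eq_image (fun hs ↦ EdgeStep.symm hs) hq

/-- STATEMENT 18: for a simply-connected `T`-graph `G`, `p ∈ G` and `λ ∈ Γ(p)` (the set of
labels of paths starting at `p`, together with the identity): (i) `γ ↦ γ.p` is a bijection
from `Γ(p)` onto `G`; (ii) `Γ(λ.p) = Γ(p)·λ⁻¹`. -/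
theorem statement18 (Γ : Type) [Group Γ] [Countable Γ] (A : Type) [CommGroup A]
    [Countable A] (hA : ∀ x : A, x ^ 2 = 1) (φ : Γ →* MulAut A)
    (m : ℕ) (γv : Fin m → Γ) (hdist : Function.Injective γv)
    (fv : Fin m → MonoidAlgebra Zhalf A)
    (G : Finset (MonoidAlgebra Zhalf A))
    (hne : ∀ p ∈ G, p ≠ 0) (hidem : ∀ p ∈ G, p * p = p)
    (horth : ∀ p ∈ G, ∀ q ∈ G, p ≠ q → p * q = 0)
    (hgraph : ∀ p ∈ G, ∀ i, fv i * p = 0 ∨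
      ((∃ c : Zhalf, c ≠ 0 ∧ fv i * p = MonoidAlgebra.single (1 : A) c * p) ∧ gact φ (γv i) p ∈ G))
    (hconn : ∀ p ∈ G, ∀ q ∈ G, ∃ g : Γ, Reach (EdgeStep φ γv fv G) p g q)
    (hsimp : ∀ p ∈ G, ∀ g : Γ, Reach (EdgeStep φ γv fv G) p g p → g = 1)
    (p : MonoidAlgebra Zhalf A) (hp : p ∈ G) (lam : Γ)
    (hlam : lam ∈ {g : Γ | ∃ q, Reach (EdgeStep φ γv fv G) p g q}) :
    Set.BijOn (fun g => gact φ g p)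
        {g : Γ | ∃ q, Reach (EdgeStep φ γv fv G) p g q} ↑G ∧
      {g : Γ | ∃ q, Reach (EdgeStep φ γv fv G) (gact φ lam p) g q} =
        (fun g => g * lam⁻¹) '' {g : Γ | ∃ q, Reach (EdgeStep φ γv fv G) p g q} :=
  statement18_general Γ A φ m γv fv G hconn hsimp p hp lam hlam
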